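/- For every real q>1, every n≥1 and every x∈[0,∞), the third central moment of the q-Szász operator is M_{n,q}((t−x)^3;x) = x/[n]_q^2 + (q−1)x^2/[n]_q. -/

import Mathlib

open scoped BigOperators

/-- The `q`-integer `[k]_q = (q^k - 1)/(q - 1)`. -/
noncomputable def qNat (q : ℝ) (k : ℕ) : ℝ := (q ^ k - 1) / (q - 1)

/-- The `q`-factorial `[k]_q! = [1]_q [2]_q ⋯ [k]_q`, with `[0]_q! = 1`. -/
noncomputable def qFactorial (q : ℝ) : ℕ → ℝ
  | 0 => 1
  | k + 1 => qFactorial q k * qNat q (k + 1)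

/-- The `q`-exponential function `e_q(z) = ∑_{k=0}^∞ z^k/[k]_q!`. -/
noncomputable def qExp (q z : ℝ) : ℝ := ∑' k : ℕ, z ^ k / qFactorial q k

/-- The `q`-Szász basis function
`s_{n,k}(q;x) = q^{-k(k-1)/2} ([n]_q^k x^k/[k]_q!) e_q(-[n]_q q^{-k} x)`. -/
noncomputable def qSzaszBasis (q : ℝ) (n k : ℕ) (x : ℝ) : ℝ :=
  (q ^ (k * (k - 1) / 2))⁻¹ * (qNat q n ^ k * x ^ k / qFactorial q k) *
    qExp q (-(qNat q n) * q ^ (-(k : ℤ)) * x)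

/-- The `q`-Szász operator `M_{n,q}(f;x) = ∑_{k=0}^∞ f([k]_q/[n]_q) s_{n,k}(q;x)`. -/
noncomputable def qSzasz (q : ℝ) (n : ℕ) (f : ℝ → ℝ) (x : ℝ) : ℝ :=
  ∑' k : ℕ, f (qNat q k / qNat q n) * qSzaszBasis q n k x

/-- The weight `w_0(x) = 1`, `w_p(x) = (1 + x^p)⁻¹` for `p ≥ 1`. -/
noncomputable def weight (p : ℕ) (x : ℝ) : ℝ := if p = 0 then 1 else (1 + x ^ p)⁻¹

/-- The weighted sup-norm `‖f‖_p = sup_{x ≥ 0} w_p(x)|f(x)|`. -/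
noncomputable def wnorm (p : ℕ) (f : ℝ → ℝ) : ℝ :=
  ⨆ x : Set.Ici (0 : ℝ), weight p x.1 * |f x.1|

/-- Membership in the space `C_p`: `f` is continuous on `[0,∞)` and `w_p f` is
uniformly continuous and bounded on `[0,∞)`. -/
def MemCp (p : ℕ) (f : ℝ → ℝ) : Prop :=
  ContinuousOn f (Set.Ici 0) ∧
  UniformContinuousOn (fun x => weight p x * f x) (Set.Ici 0) ∧
  ∃ M : ℝ, ∀ x ∈ Set.Ici (0 : ℝ), |weight p x * f x| ≤ M

/-- The second difference `Δ_h² f(x) = f(x+2h) - 2f(x+h) + f(x)`. -/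
noncomputable def delta2 (f : ℝ → ℝ) (h x : ℝ) : ℝ := f (x + 2 * h) - 2 * f (x + h) + f x

/-- The second modulus of smoothness `ω_p²(f;δ) = sup_{0<h≤δ} ‖Δ_h² f‖_p`. -/
noncomputable def omega2 (p : ℕ) (f : ℝ → ℝ) (δ : ℝ) : ℝ :=
  ⨆ h : {h : ℝ // 0 < h ∧ h ≤ δ}, wnorm p (fun x => delta2 f h.1 x)

/-- The (first) modulus of continuity on `[0,∞)`:
`ω(g;δ) = sup {|g(s)-g(t)| : s,t ≥ 0, |s-t| ≤ δ}`. -/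
noncomputable def omega1 (g : ℝ → ℝ) (δ : ℝ) : ℝ :=
  sSup {d : ℝ | ∃ s t : ℝ, 0 ≤ s ∧ 0 ≤ t ∧ |s - t| ≤ δ ∧ d = |g s - g t|}

/-- The `q`-derivative `(D_q g)(x) = (g(qx) - g(x))/((q-1)x)`. -/
noncomputable def qDeriv (q : ℝ) (g : ℝ → ℝ) (x : ℝ) : ℝ := (g (q * x) - g x) / ((q - 1) * x)

/-- The `q`-Stirling-type numbers: `S_q(0,0)=1`, `S_q(m,0)=0` for `m>0`,
`S_q(m,j)=0` for `m<j`, and `S_q(m+1,j)=[j]_q S_q(m,j) + S_q(m,j-1)`. -/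
noncomputable def qStirling (q : ℝ) : ℕ → ℕ → ℝ
  | 0, 0 => 1
  | 0, _ + 1 => 0
  | _ + 1, 0 => 0
  | m + 1, j + 1 => qNat q (j + 1) * qStirling q m (j + 1) + qStirling q m j

/-!
Write `a = [n]_q x`. Then `s_{n,k}(q;x) = p_k(a)` with
`p_k(a) = q^{-k(k-1)/2} a^k/[k]_q! · e_q(-a q^{-k})`, a `q`-analogue of the Poisson weights.
Expanding `e_q` and collecting the terms of total degree `m` in `a` shows `∑_k p_k(a) = 1`: for
`m > 0` the coefficient of `a^m` vanishes by a telescoping `q`-binomial identity. The shift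
`p_{j+m}(a) [j+m]_q!/[j]_q! = q^{-m(m-1)/2} a^m p_j(a q^{-m})` then gives the factorial moments
`∑_k ∏_{i<m} ([k]_q - [i]_q) p_k(a) = a^m`, so `M_{n,q}` sends `∏_{i<m} (t - [i]_q/[n]_q)`
to `x^m`. Expanding `(t - x)^3` in these polynomials gives the formula.
-/

open Finset

lemma Nat.add_choose_two (a b : ℕ) : (a + b).choose 2 = a.choose 2 + b.choose 2 + a * b := by
  induction b with
  | zero => simp
  | succ b ih =>
    rw [← add_assoc, Nat.choose_succ_succ', ih, Nat.choose_succ_succ', Nat.choose_one_right,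
      Nat.choose_one_right]
    ring

theorem HasSum.sum_antidiagonal {α : Type*} [AddCommMonoid α] [TopologicalSpace α]
    [ContinuousAdd α] [RegularSpace α] {T : ℕ × ℕ → α} {a : α} (h : HasSum T a) :
    HasSum (fun m => ∑ kl ∈ antidiagonal m, T kl) a := by
  refine (HasAntidiagonal.sigmaAntidiagonalEquivProd.hasSum_iff.mpr h).sigma fun m => ?_
  have h := hasSum_fintype fun kl : antidiagonal m => T kl
  rwa [sum_coe_sort] at h

section QNumbers

variable {q : ℝ}

lemma qNat_eq_sum_pow (hq : q ≠ 1) (k : ℕ) : qNat q k = ∑ i ∈ range k, q ^ i :=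
  (geom_sum_eq hq k).symm

lemma qNat_add (hq : q ≠ 1) (a b : ℕ) : qNat q (a + b) = qNat q a + q ^ a * qNat q b := by
  have : q - 1 ≠ 0 := sub_ne_zero.mpr hq
  simp only [qNat, pow_add]
  field_simp
  ring

lemma natCast_le_qNat (hq : 1 < q) (k : ℕ) : (k : ℝ) ≤ qNat q k := by
  rw [qNat_eq_sum_pow hq.ne']
  simpa using card_nsmul_le_sum (range k) (q ^ ·) 1 fun i _ => one_le_pow₀ hq.le

lemma qNat_pos (hq : 1 < q) {k : ℕ} (hk : k ≠ 0) : 0 < qNat q k :=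
  (Nat.cast_pos.mpr (Nat.pos_of_ne_zero hk)).trans_le (natCast_le_qNat hq k)

lemma qFactorial_succ (k : ℕ) : qFactorial q (k + 1) = qFactorial q k * qNat q (k + 1) := rfl

lemma factorial_le_qFactorial (hq : 1 < q) (k : ℕ) : (k.factorial : ℝ) ≤ qFactorial q k := by
  induction k with
  | zero => simp [qFactorial]
  | succ k ih =>
    rw [Nat.factorial_succ, Nat.cast_mul, mul_comm, qFactorial_succ]
    exact mul_le_mul ih (natCast_le_qNat hq _) (by positivity) (ih.trans' (by positivity))

lemma qFactorial_pos (hq : 1 < q) (k : ℕ) : 0 < qFactorial q k :=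
  (Nat.cast_pos.mpr k.factorial_pos).trans_le (factorial_le_qFactorial hq k)

lemma summable_pow_div_qFactorial (hq : 1 < q) (z : ℝ) :
    Summable fun k => z ^ k / qFactorial q k := by
  refine (Real.summable_pow_div_factorial |z|).of_norm_bounded fun k => ?_
  simp only [norm_div, norm_pow, Real.norm_eq_abs, abs_of_pos (qFactorial_pos hq k)]
  gcongr
  exact factorial_le_qFactorial hq k

end QNumbers

section QExpIdentity

variable {q : ℝ}

/-- The `q`-analogue of `∑_{k+j=m} (-1)^j / (k! j!) = 0`, the coefficient identity behind
`e^a e^{-a} = 1`. -/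
lemma sum_antidiagonal_neg_one_pow_div_qFactorial_eq_zero (hq : 1 < q) {m : ℕ} (hm : m ≠ 0) :
    ∑ kl ∈ antidiagonal m, (-1) ^ kl.2 /
      (q ^ (kl.1.choose 2 + kl.1 * kl.2) * qFactorial q kl.1 * qFactorial q kl.2) = 0 := by
  obtain ⟨m, rfl⟩ : ∃ m', m = m' + 1 := ⟨m - 1, by omega⟩
  set r : ℕ → ℕ → ℝ := fun k j =>
    (-1) ^ j / (q ^ (k.choose 2 + k * j) * qFactorial q k * qFactorial q j) with hr
  change ∑ kl ∈ antidiagonal (m + 1), r kl.1 kl.2 = 0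
  have hqNat0 : qNat q 0 = 0 := by simp [qNat]
  -- `[k + j] = [j] + q^j [k]` splits each term; the two halves cancel along the antidiagonal.
  have hsplit : qNat q (m + 1) * ∑ kl ∈ antidiagonal (m + 1), r kl.1 kl.2 =
      ∑ kl ∈ antidiagonal (m + 1), qNat q kl.2 * r kl.1 kl.2 +
        ∑ kl ∈ antidiagonal (m + 1), q ^ kl.2 * qNat q kl.1 * r kl.1 kl.2 := by
    rw [mul_sum, ← sum_add_distrib]
    refine sum_congr rfl fun kl hkl => ?_
    rw [← mem_antidiagonal.mp hkl, add_comm, qNat_add hq.ne']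
    ring
  have hcancel : ∀ k j,
      qNat q (j + 1) * r k (j + 1) + q ^ j * qNat q (k + 1) * r (k + 1) j = 0 := by
    intro k j
    have hk := (qFactorial_pos hq k).ne'
    have hj := (qFactorial_pos hq j).ne'
    have hk1 := (qNat_pos hq k.succ_ne_zero).ne'
    have hj1 := (qNat_pos hq j.succ_ne_zero).ne'
    simp only [hr, qFactorial_succ, Nat.choose_succ_succ', Nat.choose_one_right, pow_add, pow_succ]
    field_simp
    ring
  have hfirst : ∑ kl ∈ antidiagonal (m + 1), qNat q kl.2 * r kl.1 kl.2 =
      ∑ kl ∈ antidiagonal m, qNat q (kl.2 + 1) * r kl.1 (kl.2 + 1) := by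
    rw [Nat.sum_antidiagonal_succ', hqNat0, zero_mul, zero_add]
  have hsecond : ∑ kl ∈ antidiagonal (m + 1), q ^ kl.2 * qNat q kl.1 * r kl.1 kl.2 =
      ∑ kl ∈ antidiagonal m, q ^ kl.2 * qNat q (kl.1 + 1) * r (kl.1 + 1) kl.2 := by
    rw [Nat.sum_antidiagonal_succ, hqNat0, mul_zero, zero_mul, zero_add]
  rw [hfirst, hsecond, ← sum_add_distrib] at hsplit
  simp only [hcancel, sum_const_zero] at hsplit
  exact (mul_eq_zero.mp hsplit).resolve_left (qNat_pos hq m.succ_ne_zero).ne'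

end QExpIdentity

section QPoisson

variable {q : ℝ}

noncomputable def qPoissonWeight (q a : ℝ) (k : ℕ) : ℝ :=
  a ^ k / (q ^ k.choose 2 * qFactorial q k) * qExp q (-a / q ^ k)

lemma qSzaszBasis_eq_qPoissonWeight (q : ℝ) (n k : ℕ) (x : ℝ) :
    qSzaszBasis q n k x = qPoissonWeight q (qNat q n * x) k := by
  rw [qSzaszBasis, qPoissonWeight, ← Nat.choose_two_right, zpow_neg, zpow_natCast, mul_pow,
    show -qNat q n * (q ^ k)⁻¹ * x = -(qNat q n * x) / q ^ k by ring]
  ring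

theorem hasSum_qPoissonWeight (hq : 1 < q) (a : ℝ) : HasSum (qPoissonWeight q a) 1 := by
  set T : ℕ × ℕ → ℝ := fun p =>
    a ^ p.1 / (q ^ p.1.choose 2 * qFactorial q p.1) * ((-a / q ^ p.1) ^ p.2 / qFactorial q p.2)
    with hT
  have hrow : ∀ k, HasSum (fun j => T (k, j)) (qPoissonWeight q a k) := fun k =>
    (summable_pow_div_qFactorial hq _).hasSum.mul_left _
  have hsummable : Summable T := by
    refine ((summable_pow_div_qFactorial hq |a|).mul_of_nonneg
      (summable_pow_div_qFactorial hq |a|) (fun k => ?_) (fun j => ?_)).of_norm_bounded ?_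
    · have := qFactorial_pos hq k; positivity
    · have := qFactorial_pos hq j; positivity
    rintro ⟨k, j⟩
    have hk := qFactorial_pos hq k
    have hj := qFactorial_pos hq j
    have hC : 1 ≤ q ^ k.choose 2 := one_le_pow₀ hq.le
    have hqk : 1 ≤ q ^ k := one_le_pow₀ hq.le
    simp only [hT, norm_mul, norm_div, norm_pow, norm_neg, Real.norm_eq_abs,
      abs_of_pos hk, abs_of_pos hj, abs_of_pos (zero_lt_one.trans hq)]
    gcongr
    · exact le_mul_of_one_le_left hk.le hC
    · exact div_le_self (abs_nonneg a) hqk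
  have hdiag : ∀ m, ∑ kl ∈ antidiagonal m, T kl = if m = 0 then 1 else 0 := by
    intro m
    split_ifs with hm
    · simp [hm, hT, qFactorial]
    rw [← mul_zero (a ^ m), ← sum_antidiagonal_neg_one_pow_div_qFactorial_eq_zero hq hm,
      mul_sum]
    refine sum_congr rfl fun kl hkl => ?_
    rw [← mem_antidiagonal.mp hkl]
    have := qFactorial_pos hq kl.1
    have := qFactorial_pos hq kl.2
    simp only [hT]
    rw [pow_add, pow_add, pow_mul, div_pow, neg_pow a]
    field_simp
  have hsum : HasSum T 1 := by
    have h := hsummable.hasSum.sum_antidiagonal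
    simp only [hdiag] at h
    rw [(hasSum_ite_eq 0 (1 : ℝ)).unique h]
    exact hsummable.hasSum
  exact hsum.prod_fiberwise hrow

end QPoisson

section FactorialMoments

variable {q : ℝ}

lemma prod_qNat_sub_mul_qFactorial (hq : q ≠ 1) (m j : ℕ) :
    (∏ i ∈ range m, (qNat q (j + m) - qNat q i)) * qFactorial q j =
      q ^ m.choose 2 * qFactorial q (j + m) := by
  induction m generalizing j with
  | zero => simp
  | succ m ih =>
    have hlast : qNat q (j + (m + 1)) - qNat q m = q ^ m * qNat q (j + 1) := by
      rw [show j + (m + 1) = m + (j + 1) by ring, qNat_add hq]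
      ring
    calc (∏ i ∈ range (m + 1), (qNat q (j + (m + 1)) - qNat q i)) * qFactorial q j
        = q ^ m *
            ((∏ i ∈ range m, (qNat q (j + 1 + m) - qNat q i)) * qFactorial q (j + 1)) := by
          rw [prod_range_succ, hlast, qFactorial_succ, show j + (m + 1) = j + 1 + m by ring]
          ring
      _ = q ^ (m + 1).choose 2 * qFactorial q (j + (m + 1)) := by
          rw [ih, show j + 1 + m = j + (m + 1) by ring]
          simp only [Nat.choose_succ_succ', Nat.choose_one_right, pow_add]
          ring

lemma prod_qNat_sub_mul_qPoissonWeight (hq : 1 < q) (a : ℝ) (m j : ℕ) :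
    (∏ i ∈ range m, (qNat q (j + m) - qNat q i)) * qPoissonWeight q a (j + m) =
      a ^ m * qPoissonWeight q (a / q ^ m) j := by
  have hj := (qFactorial_pos hq j).ne'
  have hjm := (qFactorial_pos hq (j + m)).ne'
  have hprod := prod_qNat_sub_mul_qFactorial hq.ne' m j
  rw [← eq_div_iff hj] at hprod
  rw [hprod, qPoissonWeight, qPoissonWeight, Nat.add_choose_two, pow_add, pow_add, pow_mul,
    div_pow, show -(a / q ^ m) / q ^ j = -a / q ^ (j + m) by rw [pow_add]; ring]
  field_simp
  ring

theorem hasSum_prod_qNat_sub_mul_qPoissonWeight (hq : 1 < q) (a : ℝ) (m : ℕ) :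
    HasSum (fun k => (∏ i ∈ range m, (qNat q k - qNat q i)) * qPoissonWeight q a k)
      (a ^ m) := by
  have hlow :
      ∑ k ∈ range m, (∏ i ∈ range m, (qNat q k - qNat q i)) * qPoissonWeight q a k = 0 :=
    sum_eq_zero fun k hk => by rw [prod_eq_zero hk (sub_self _), zero_mul]
  rw [← add_zero (a ^ m), ← hlow, ← hasSum_nat_add_iff]
  simpa only [prod_qNat_sub_mul_qPoissonWeight hq, mul_one] using
    (hasSum_qPoissonWeight hq (a / q ^ m)).mul_left (a ^ m)

end FactorialMoments

theorem hasSum_prod_sub_mul_qSzaszBasis {q : ℝ} (hq : 1 < q) {n : ℕ} (hn : n ≠ 0) (x : ℝ)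
    (m : ℕ) :
    HasSum (fun k => (∏ i ∈ range m, (qNat q k / qNat q n - qNat q i / qNat q n)) *
      qSzaszBasis q n k x) (x ^ m) := by
  have hN := (qNat_pos hq hn).ne'
  have h := (hasSum_prod_qNat_sub_mul_qPoissonWeight hq (qNat q n * x) m).div_const (qNat q n ^ m)
  rw [mul_pow, mul_div_cancel_left₀ _ (pow_ne_zero m hN)] at h
  refine h.congr_fun fun k => ?_
  simp only [qSzaszBasis_eq_qPoissonWeight, ← sub_div, prod_div_distrib, prod_const, card_range]
  ring

theorem qSzasz_central_moment_three_general (q : ℝ) (hq : 1 < q) (n : ℕ) (hn : 1 ≤ n)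
    (x : ℝ) :
    qSzasz q n (fun t => (t - x) ^ 3) x =
      x / qNat q n ^ 2 + (q - 1) * x ^ 2 / qNat q n := by
  rw [qSzasz]
  have hmoment := hasSum_prod_sub_mul_qSzaszBasis hq (n := n) (by omega) x
  have hN : qNat q n ≠ 0 := (qNat_pos hq (by omega)).ne'
  set N := qNat q n
  have hqNat : qNat q 0 = 0 ∧ qNat q 1 = 1 ∧ qNat q 2 = 1 + q := by
    simp [qNat_eq_sum_pow hq.ne', sum_range_succ]
  have h := (((hmoment 3).add ((hmoment 2).mul_left ((2 + q) / N - 3 * x))).add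
    ((hmoment 1).mul_left (1 / N ^ 2 - 3 * x / N + 3 * x ^ 2))).sub ((hmoment 0).mul_left (x ^ 3))
  rw [show x ^ 3 + ((2 + q) / N - 3 * x) * x ^ 2 + (1 / N ^ 2 - 3 * x / N + 3 * x ^ 2) * x ^ 1 -
      x ^ 3 * x ^ 0 = x / N ^ 2 + (q - 1) * x ^ 2 / N by field_simp; ring] at h
  refine (h.congr_fun fun k => ?_).tsum_eq
  simp only [prod_range_succ, prod_range_zero, hqNat]
  field_simp
  ring

/-- third central moment
`M_{n,q}((t-x)³;x) = x/[n]_q² + (q-1)x²/[n]_q`. -/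
theorem qSzasz_central_moment_three (q : ℝ) (hq : 1 < q) (n : ℕ) (hn : 1 ≤ n)
    (x : ℝ) (hx : 0 ≤ x) :
    qSzasz q n (fun t => (t - x) ^ 3) x =
      x / qNat q n ^ 2 + (q - 1) * x ^ 2 / qNat q n :=
  qSzasz_central_moment_three_general q hq n hn x
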